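/- Let T^1 = KR_right(S,A)^1 for a finite semigroup S generated by a finite alphabet A, and let D be the Lyndon–Chiswell length function on T^1. For all α, β, γ ∈ T^1, D(αγ, βγ) ≥ D(α, β). -/

import Mathlib

open scoped Classical

namespace KRHolonomy

/-- Green's quasi-order `≤_J` on a monoid: `a ≤_J b` iff `a ∈ M b M`. -/
def leJ {M : Type*} [Monoid M] (a b : M) : Prop := ∃ x y : M, a = x * b * y

/-- `a <_J b` iff `a ≤_J b` and not `b ≤_J a`. -/
def ltJ {M : Type*} [Monoid M] (a b : M) : Prop := leJ a b ∧ ¬ leJ b a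

/-- Green's quasi-order `≤_R` on a monoid: `a ≤_R b` iff `a ∈ b M`. -/
def leR {M : Type*} [Monoid M] (a b : M) : Prop := ∃ x : M, a = b * x

/-- `a <_R b` iff `a ≤_R b` and not `b ≤_R a`. -/
def ltR {M : Type*} [Monoid M] (a b : M) : Prop := leR a b ∧ ¬ leR b a

/-- Green's quasi-order `≤_L` on a monoid: `a ≤_L b` iff `a ∈ M b`. -/
def leL {M : Type*} [Monoid M] (a b : M) : Prop := ∃ x : M, a = x * b

/-- `a <_L b` iff `a ≤_L b` and not `b ≤_L a`. -/
def ltL {M : Type*} [Monoid M] (a b : M) : Prop := leL a b ∧ ¬ leL b a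

/-- The Dedekind height function: `height x` is the largest `k` such that there is a chain
`x₀ >_J x₁ >_J ⋯ >_J x_k = x`. -/
noncomputable def height {M : Type*} [Monoid M] (x : M) : ℕ :=
  sSup {k | ∃ c : ℕ → M, c k = x ∧ ∀ i < k, ltJ (c (i + 1)) (c i)}

variable {A S : Type*} [Semigroup S]

/-- The edge `(s, a, s·θ(a))` of the right Cayley graph of `(S,A)` is a transition edge:
there is no path in the right Cayley graph from `s·θ(a)` back to `s`. -/
def IsTransitionEdge (θ : FreeMonoid A →* WithOne S) (s : WithOne S) (a : A) : Prop :=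
  ¬ ∃ w : FreeMonoid A, s * θ (FreeMonoid.of a) * θ w = s

/-- The (ordered) sequence of transition edges along the path of the right Cayley graph
starting at `s` and reading the word `u`; an edge is recorded as a pair (source, label). -/
noncomputable def transEdgesFrom (θ : FreeMonoid A →* WithOne S) :
    WithOne S → List A → List (WithOne S × A)
  | _, [] => []
  | s, a :: w =>
      (if IsTransitionEdge θ s a then [(s, a)] else []) ++
        transEdgesFrom θ (s * θ (FreeMonoid.of a)) w

/-- The sequence of transition edges of the path starting at `1` reading `u`. -/
noncomputable def transEdges (θ : FreeMonoid A →* WithOne S) (u : FreeMonoid A) :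
    List (WithOne S × A) :=
  transEdgesFrom θ 1 (FreeMonoid.toList u)

/-- The congruence (`τ_r`, together with `(1,1)`) defining the right Karnofsky–Rhodes
expansion: two words of `A^*` represent the same element of `KR_right(S,A)¹` iff they are
both empty or both nonempty, they have the same image in `S¹` and the same sequence of
transition edges. -/
def KRrel (θ : FreeMonoid A →* WithOne S) (u v : FreeMonoid A) : Prop :=
  (u = 1 ∧ v = 1) ∨
    (u ≠ 1 ∧ v ≠ 1 ∧ θ u = θ v ∧ transEdges θ u = transEdges θ v)

/-- Green's quasi-order `≤_J` on `T¹ = KR_right(S,A)¹`, expressed on word representatives: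
`u ≤_J v` iff `u = p v q` holds in `T¹` for some `p, q ∈ T¹`. -/
def leJT (θ : FreeMonoid A →* WithOne S) (u v : FreeMonoid A) : Prop :=
  ∃ p q : FreeMonoid A, KRrel θ u (p * v * q)

/-- `<_J` on `T¹ = KR_right(S,A)¹`, expressed on word representatives. -/
def ltJT (θ : FreeMonoid A →* WithOne S) (u v : FreeMonoid A) : Prop :=
  leJT θ u v ∧ ¬ leJT θ v u

/-- The Dedekind height function on `T¹ = KR_right(S,A)¹`, expressed on word
representatives: the largest `k` such that there is a chain
`t₀ >_J t₁ >_J ⋯ >_J t_k = t` in `T¹`. -/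
noncomputable def heightT (θ : FreeMonoid A →* WithOne S) (u : FreeMonoid A) : ℕ :=
  sSup {k | ∃ c : ℕ → FreeMonoid A, KRrel θ (c k) u ∧ ∀ i < k, ltJT θ (c (i + 1)) (c i)}

/-- `ℓ = 2 · max { h(s) : s ∈ S¹ }`. -/
noncomputable def ell (S : Type*) [Semigroup S] : ℕ :=
  2 * sSup (Set.range fun s : WithOne S => height s)

/-- `ξ(u,v)`: the largest `i` (with `0 ≤ i ≤ m`, `m` the number of transition edges of `u`)
such that the first `i` transition edges of `u` and of `v` agree. -/
noncomputable def xi (θ : FreeMonoid A →* WithOne S) (u v : FreeMonoid A) : ℕ :=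
  sSup {i | i ≤ (transEdges θ u).length ∧
    (transEdges θ u).take i = (transEdges θ v).take i}

/-- The endpoint of an edge `(s, a)` of the right Cayley graph, namely `s·θ(a)`. -/
def edgeEnd (θ : FreeMonoid A →* WithOne S) (e : WithOne S × A) : WithOne S :=
  e.1 * θ (FreeMonoid.of e.2)

/-- The Lyndon–Chiswell length function `D` on `T¹ = KR_right(S,A)¹`, expressed on word
representatives.  With `k = ξ(u,v)` (and indexing the transition edges from `1` as in the
paper, so that `E_k` sits at list index `k-1`):
`D(u,v) = ℓ` if `u = v` in `T¹`; `D(u,v) = 0` if `u ≠ v` in `T¹` and `k = 0`;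
`D(u,v) = 2·h(end(E_k))` if `k > 0`, `E_{k+1}` and `E'_{k+1}` both exist and have the same
endpoint; and `D(u,v) = 2·h(end(E_k)) - 1` in all remaining cases. -/
noncomputable def lcD (θ : FreeMonoid A →* WithOne S) (u v : FreeMonoid A) : ℕ :=
  if KRrel θ u v then ell S
  else if xi θ u v = 0 then 0
  else
    let k := xi θ u v
    let base := (transEdges θ u)[k - 1]?.elim 0 fun e => height (edgeEnd θ e)
    if ∃ e e', (transEdges θ u)[k]? = some e ∧ (transEdges θ v)[k]? = some e' ∧
        edgeEnd θ e = edgeEnd θ e'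
    then 2 * base
    else 2 * base - 1

/-- The relation `∼` on `C = {(k,α) : 0 ≤ k ≤ ℓ, α ∈ T¹}`:
`(k,α) ∼ (k',β)` iff `k = k'` and `D(α,β) ≥ k`. -/
def simRel (θ : FreeMonoid A →* WithOne S)
    (p q : {p : ℕ × FreeMonoid A // p.1 ≤ ell S}) : Prop :=
  p.val.1 = q.val.1 ∧ lcD θ p.val.2 q.val.2 ≥ p.val.1

/-- The vertex set of the Chiswell tree: `∼`-classes `[k,α]`. -/
def CVert (θ : FreeMonoid A →* WithOne S) : Type _ := Quot (simRel θ)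

/-- The edge relation of the Chiswell graph: the edges are `[k,α] — [k+1,α]`
for `0 ≤ k < ℓ` and `α ∈ T¹`. -/
def edgeRel (θ : FreeMonoid A →* WithOne S) (v w : CVert θ) : Prop :=
  ∃ (k : ℕ) (α : FreeMonoid A) (hk : k + 1 ≤ ell S),
    v = Quot.mk (simRel θ) ⟨(k, α), Nat.le_of_succ_le hk⟩ ∧
    w = Quot.mk (simRel θ) ⟨(k + 1, α), hk⟩

/-- The Chiswell graph `𝒞`. -/
def CGraph (θ : FreeMonoid A →* WithOne S) : SimpleGraph (CVert θ) :=
  SimpleGraph.fromRel (edgeRel θ)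

/-- The depth function of the Chiswell tree: `δ([k,α]) = k`. -/
def depth (θ : FreeMonoid A →* WithOne S) : CVert θ → ℕ :=
  Quot.lift (fun p => p.val.1) (fun _ _ h => h.1)

end KRHolonomy

/-!
The transition edges of `αγ` are those of `α` followed by those of the path reading `γ` from
`θ(α)`; hence `ξ(αγ, βγ) ≥ ξ(α, β)` and the first `ξ(α, β)` edges are unchanged. Along a path
the endpoints of successive transition edges strictly decrease in the `J`-order (for a transition
edge `s → sa`, stability of finite monoids gives `sa <_J s`), so their heights strictly increase.
Thus if `ξ` grows, `D` moves up by at least one level; if it does not, the last common edge is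
the same and the "same endpoints" case of `(α, β)` persists for `(αγ, βγ)`.
-/

namespace KRHolonomy

instance {α : Type*} [Finite α] : Finite (WithOne α) := inferInstanceAs (Finite (Option α))

section Green

variable {M : Type*} [Monoid M]

theorem leJ_trans {a b c : M} (hab : leJ a b) (hbc : leJ b c) : leJ a c := by
  obtain ⟨x, y, rfl⟩ := hab
  obtain ⟨x', y', rfl⟩ := hbc
  exact ⟨x * x', y' * y, by simp only [mul_assoc]⟩

theorem leJ_mul_right (a b : M) : leJ (a * b) a := ⟨1, b, by rw [one_mul]⟩

theorem ltJ_of_ltJ_of_leJ {a b c : M} (hab : ltJ a b) (hbc : leJ b c) : ltJ a c :=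
  ⟨leJ_trans hab.1 hbc, fun hca => hab.2 (leJ_trans hbc hca)⟩

theorem ltJ_irrefl (a : M) : ¬ ltJ a a := fun h => h.2 h.1

theorem ltJ_of_chain {c : ℕ → M} {k : ℕ} (hc : ∀ i < k, ltJ (c (i + 1)) (c i)) {i j : ℕ}
    (hij : i < j) (hjk : j ≤ k) : ltJ (c j) (c i) := by
  induction j, hij using Nat.le_induction with
  | base => exact hc i (by omega)
  | succ j hij ih => exact ltJ_of_ltJ_of_leJ (hc j (by omega)) (ih (by omega)).1

/-- Stability of finite monoids. -/
theorem leR_mul_of_leJ [Finite M] {s a : M} (h : leJ s (s * a)) : leR s (s * a) := by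
  obtain ⟨x, y, hs⟩ := h
  have hpow : ∀ n : ℕ, s = x ^ n * s * (a * y) ^ n := by
    intro n
    induction n with
    | zero => simp
    | succ n ih =>
      calc s = x * (s * a) * y := hs
        _ = x * s * (a * y) := by simp only [mul_assoc]
        _ = x ^ (n + 1) * s * (a * y) ^ (n + 1) := by
          conv_lhs => rw [ih]
          rw [pow_succ' x, pow_succ (a * y)]; simp only [mul_assoc]
  obtain ⟨i, j, hij, hij_eq⟩ := Set.finite_univ.exists_lt_map_eq_of_forall_mem
    (f := fun n : ℕ => (a * y) ^ n) (fun _ => Set.mem_univ _)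
  obtain ⟨d, rfl⟩ := Nat.exists_eq_add_of_lt hij
  have hperiod : s = s * (a * y) ^ (d + 1) := by
    calc s = x ^ i * s * (a * y) ^ (i + d + 1) := by rw [← hij_eq]; exact hpow i
      _ = s * (a * y) ^ (d + 1) := by
        rw [add_assoc, pow_add, ← mul_assoc, ← hpow i]
  refine ⟨y * (a * y) ^ d, ?_⟩
  conv_lhs => rw [hperiod]
  rw [pow_succ']; simp only [mul_assoc]

variable [Finite M]

theorem chain_length_lt_card {x : M} {k : ℕ}
    (h : ∃ c : ℕ → M, c k = x ∧ ∀ i < k, ltJ (c (i + 1)) (c i)) : k < Nat.card M := by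
  obtain ⟨c, -, hc⟩ := h
  have hinj : Function.Injective fun i : Fin (k + 1) => c i := by
    intro i j (hij : c i = c j)
    by_contra hne
    rcases lt_or_gt_of_ne (Fin.val_ne_of_ne hne) with hlt | hlt <;>
      exact ltJ_irrefl _ (hij ▸ ltJ_of_chain hc hlt (by omega))
  simpa using Nat.card_le_card_of_injective _ hinj

theorem exists_chain_height (x : M) :
    ∃ c : ℕ → M, c (height x) = x ∧ ∀ i < height x, ltJ (c (i + 1)) (c i) :=
  Nat.sSup_mem (s := {k | ∃ c : ℕ → M, c k = x ∧ ∀ i < k, ltJ (c (i + 1)) (c i)})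
    ⟨0, fun _ => x, rfl, by simp⟩ ⟨Nat.card M, fun _ hk => (chain_length_lt_card hk).le⟩

theorem height_lt_height_of_ltJ {x y : M} (h : ltJ x y) : height y < height x := by
  obtain ⟨c, hcy, hc⟩ := exists_chain_height y
  have hext : ∃ c' : ℕ → M, c' (height y + 1) = x ∧
      ∀ i < height y + 1, ltJ (c' (i + 1)) (c' i) := by
    refine ⟨fun i => if i = height y + 1 then x else c i, by simp, fun i hi => ?_⟩
    rcases Nat.lt_succ_iff_lt_or_eq.mp hi with hi | rfl
    · dsimp only
      rw [if_neg (by omega), if_neg (by omega)]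
      exact hc i hi
    · simpa [hcy] using h
  exact le_csSup ⟨Nat.card M, fun _ hk => (chain_length_lt_card hk).le⟩ hext

end Green

theorem two_mul_height_le_ell {S : Type*} [Semigroup S] [Finite S] (x : WithOne S) :
    2 * height x ≤ ell S :=
  Nat.mul_le_mul_left 2 (le_csSup (Set.finite_range _).bddAbove ⟨x, rfl⟩)

variable {A S : Type*} [Semigroup S] {θ : FreeMonoid A →* WithOne S}

section TransitionEdges

theorem transEdgesFrom_append (u v : List A) (s : WithOne S) :
    transEdgesFrom θ s (u ++ v) =
      transEdgesFrom θ s u ++ transEdgesFrom θ (s * θ (FreeMonoid.ofList u)) v := by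
  induction u generalizing s with
  | nil => simp [transEdgesFrom]
  | cons a u ih =>
    rw [List.cons_append, transEdgesFrom, transEdgesFrom, ih, List.append_assoc,
      FreeMonoid.ofList_cons, map_mul, mul_assoc]

theorem transEdges_mul (u v : FreeMonoid A) :
    transEdges θ (u * v) = transEdges θ u ++ transEdgesFrom θ (θ u) (FreeMonoid.toList v) := by
  rw [transEdges, transEdges, FreeMonoid.toList_mul, transEdgesFrom_append, one_mul,
    FreeMonoid.ofList_toList]

theorem getElem?_transEdges_mul {u : FreeMonoid A} {i : ℕ} {e : WithOne S × A}
    (he : (transEdges θ u)[i]? = some e) (w : FreeMonoid A) :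
    (transEdges θ (u * w))[i]? = some e := by
  rw [transEdges_mul, List.getElem?_append_left (List.getElem?_eq_some_iff.mp he).1, he]

theorem KRrel_mul_right {u v : FreeMonoid A} (h : KRrel θ u v) (w : FreeMonoid A) :
    KRrel θ (u * w) (v * w) := by
  rcases h with ⟨rfl, rfl⟩ | ⟨hu, hv, hθ, hE⟩
  · by_cases hw : w = 1
    · exact Or.inl (by simp [hw])
    · exact Or.inr (by simp [hw])
  · refine Or.inr ⟨fun h => hu (eq_one_of_mul_right' h), fun h => hv (eq_one_of_mul_right' h),
      by rw [map_mul, map_mul, hθ], by rw [transEdges_mul, transEdges_mul, hθ, hE]⟩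

theorem surjective_of_forall_exists_eq_coe
    (hgen : ∀ s : S, ∃ u : FreeMonoid A, θ u = (s : WithOne S)) : Function.Surjective θ
  | 1 => ⟨1, map_one θ⟩
  | (s : S) => hgen s

variable [Finite S] (hθ : Function.Surjective θ)
include hθ

theorem ltJ_mul_of_isTransitionEdge {s : WithOne S} {a : A} (h : IsTransitionEdge θ s a) :
    ltJ (s * θ (FreeMonoid.of a)) s := by
  refine ⟨leJ_mul_right _ _, fun hle => ?_⟩
  obtain ⟨z, hz⟩ := leR_mul_of_leJ hle
  obtain ⟨w, rfl⟩ := hθ z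
  exact h ⟨w, hz.symm⟩

theorem ltJ_edgeEnd_of_mem_transEdgesFrom {w : List A} {s : WithOne S} {e : WithOne S × A}
    (he : e ∈ transEdgesFrom θ s w) : ltJ (edgeEnd θ e) s := by
  induction w generalizing s with
  | nil => simp [transEdgesFrom] at he
  | cons a w ih =>
    rw [transEdgesFrom, List.mem_append] at he
    rcases he with he | he
    · obtain ⟨htr, he⟩ := List.mem_ite_nil_right.mp he
      rw [List.mem_singleton.mp he]
      exact ltJ_mul_of_isTransitionEdge hθ htr
    · exact ltJ_of_ltJ_of_leJ (ih he) (leJ_mul_right _ _)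

theorem pairwise_transEdgesFrom (w : List A) (s : WithOne S) :
    (transEdgesFrom θ s w).Pairwise fun e e' => ltJ (edgeEnd θ e') (edgeEnd θ e) := by
  induction w generalizing s with
  | nil => simp [transEdgesFrom]
  | cons a w ih =>
    rw [transEdgesFrom, List.pairwise_append]
    refine ⟨by split_ifs <;> simp, ih _, fun e he e' he' => ?_⟩
    rw [List.mem_singleton.mp (List.mem_ite_nil_right.mp he).2]
    exact ltJ_edgeEnd_of_mem_transEdgesFrom hθ he'

theorem height_edgeEnd_lt {u : FreeMonoid A} {i j : ℕ} {e e' : WithOne S × A}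
    (he : (transEdges θ u)[i]? = some e) (he' : (transEdges θ u)[j]? = some e') (hij : i < j) :
    height (edgeEnd θ e) < height (edgeEnd θ e') := by
  obtain ⟨-, rfl⟩ := List.getElem?_eq_some_iff.mp he
  obtain ⟨hj, rfl⟩ := List.getElem?_eq_some_iff.mp he'
  exact height_lt_height_of_ltJ
    (List.pairwise_iff_getElem.mp (pairwise_transEdgesFrom hθ _ 1) i j _ hj hij)

end TransitionEdges

section CommonPrefix

theorem xi_spec (u v : FreeMonoid A) :
    xi θ u v ≤ (transEdges θ u).length ∧
      (transEdges θ u).take (xi θ u v) = (transEdges θ v).take (xi θ u v) :=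
  Nat.sSup_mem (s := {i | i ≤ (transEdges θ u).length ∧
      (transEdges θ u).take i = (transEdges θ v).take i})
    ⟨0, Nat.zero_le _, rfl⟩ ⟨_, fun _ hi => hi.1⟩

theorem le_xi {u v : FreeMonoid A} {i : ℕ} (hi : i ≤ (transEdges θ u).length)
    (htake : (transEdges θ u).take i = (transEdges θ v).take i) : i ≤ xi θ u v :=
  le_csSup ⟨_, fun _ hi => hi.1⟩ ⟨hi, htake⟩

theorem xi_le_length_right (u v : FreeMonoid A) : xi θ u v ≤ (transEdges θ v).length := by
  obtain ⟨hu, htake⟩ := xi_spec (θ := θ) u v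
  have h := congrArg List.length htake
  simp only [List.length_take] at h
  omega

theorem xi_le_xi_mul_right (u v w : FreeMonoid A) : xi θ u v ≤ xi θ (u * w) (v * w) := by
  obtain ⟨hu, htake⟩ := xi_spec (θ := θ) u v
  refine le_xi (by rw [transEdges_mul, List.length_append]; omega) ?_
  rw [transEdges_mul, transEdges_mul, List.take_append_of_le_length hu,
    List.take_append_of_le_length (xi_le_length_right u v), htake]

end CommonPrefix

/-- The value `h(end E_k)`, `k = ξ(u,v)`, in the definition of `lcD`. -/
noncomputable def lcBase (θ : FreeMonoid A →* WithOne S) (u v : FreeMonoid A) : ℕ :=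
  (transEdges θ u)[xi θ u v - 1]?.elim 0 fun e => height (edgeEnd θ e)

theorem lcD_of_not_KRrel {u v : FreeMonoid A} (huv : ¬ KRrel θ u v) (hxi : xi θ u v ≠ 0) :
    lcD θ u v =
      if ∃ e e', (transEdges θ u)[xi θ u v]? = some e ∧
          (transEdges θ v)[xi θ u v]? = some e' ∧ edgeEnd θ e = edgeEnd θ e'
      then 2 * lcBase θ u v else 2 * lcBase θ u v - 1 := by
  rw [lcD, if_neg huv, if_neg hxi, lcBase]

theorem lcD_le_two_mul_lcBase {u v : FreeMonoid A} (huv : ¬ KRrel θ u v) :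
    lcD θ u v ≤ 2 * lcBase θ u v := by
  by_cases hxi : xi θ u v = 0
  · simp [lcD, huv, hxi]
  · rw [lcD_of_not_KRrel huv hxi]
    split_ifs <;> omega

theorem two_mul_lcBase_sub_one_le_lcD {u v : FreeMonoid A} (huv : ¬ KRrel θ u v)
    (hxi : xi θ u v ≠ 0) : 2 * lcBase θ u v - 1 ≤ lcD θ u v := by
  rw [lcD_of_not_KRrel huv hxi]
  split_ifs <;> omega

theorem exists_lastCommonEdge {u v : FreeMonoid A} (hxi : xi θ u v ≠ 0) :
    ∃ e, (transEdges θ u)[xi θ u v - 1]? = some e ∧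
      lcBase θ u v = height (edgeEnd θ e) := by
  have hlt : xi θ u v - 1 < (transEdges θ u).length := by
    have := (xi_spec (θ := θ) u v).1
    omega
  exact ⟨_, List.getElem?_eq_getElem hlt, by rw [lcBase, List.getElem?_eq_getElem hlt,
    Option.elim_some]⟩

theorem lcBase_mul_right_of_xi_eq {u v : FreeMonoid A} (w : FreeMonoid A)
    (hxi : xi θ u v ≠ 0) (heq : xi θ (u * w) (v * w) = xi θ u v) :
    lcBase θ (u * w) (v * w) = lcBase θ u v := by
  obtain ⟨e, he, hbase⟩ := exists_lastCommonEdge hxi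
  rw [hbase, lcBase, heq, getElem?_transEdges_mul he, Option.elim_some]

theorem lcBase_lt_lcBase_mul_right_of_xi_lt [Finite S] (hθ : Function.Surjective θ)
    {u v : FreeMonoid A} (w : FreeMonoid A) (hxi : xi θ u v ≠ 0)
    (hlt : xi θ u v < xi θ (u * w) (v * w)) : lcBase θ u v < lcBase θ (u * w) (v * w) := by
  obtain ⟨e, he, hbase⟩ := exists_lastCommonEdge hxi
  obtain ⟨e', he', hbase'⟩ :=
    exists_lastCommonEdge (θ := θ) (u := u * w) (v := v * w) (by omega)
  rw [hbase, hbase']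
  exact height_edgeEnd_lt hθ (getElem?_transEdges_mul he w) he' (by omega)

theorem lcD_le_ell [Finite S] (u v : FreeMonoid A) : lcD θ u v ≤ ell S := by
  by_cases huv : KRrel θ u v
  · rw [lcD, if_pos huv]
  · by_cases hxi : xi θ u v = 0
    · simp [lcD, huv, hxi]
    · obtain ⟨e, -, hbase⟩ := exists_lastCommonEdge hxi
      exact (lcD_le_two_mul_lcBase huv).trans (hbase ▸ two_mul_height_le_ell _)

end KRHolonomy

open KRHolonomy in
theorem lcD_mul_right_ge_general {A S : Type*} [Semigroup S] [Finite S]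
    (θ : FreeMonoid A →* WithOne S)
    (hgen : ∀ s : S, ∃ u : FreeMonoid A, θ u = (s : WithOne S))
    (α β γ : FreeMonoid A) :
    lcD θ (α * γ) (β * γ) ≥ lcD θ α β := by
  by_cases hab : KRrel θ α β
  · rw [lcD, if_pos (KRrel_mul_right hab γ), lcD, if_pos hab]
  by_cases hprod : KRrel θ (α * γ) (β * γ)
  · rw [lcD, if_pos hprod]
    exact lcD_le_ell α β
  by_cases hxi : xi θ α β = 0
  · simp [lcD, hab, hxi]
  rcases (xi_le_xi_mul_right (θ := θ) α β γ).lt_or_eq with hlt | heq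
  · calc lcD θ α β ≤ 2 * lcBase θ α β := lcD_le_two_mul_lcBase hab
      _ ≤ 2 * lcBase θ (α * γ) (β * γ) - 1 := by
        have := lcBase_lt_lcBase_mul_right_of_xi_lt
          (surjective_of_forall_exists_eq_coe hgen) γ hxi hlt
        omega
      _ ≤ lcD θ (α * γ) (β * γ) := two_mul_lcBase_sub_one_le_lcD hprod (by omega)
  · rw [lcD_of_not_KRrel hab hxi, lcD_of_not_KRrel hprod (heq ▸ hxi),
      lcBase_mul_right_of_xi_eq γ hxi heq.symm, ← heq]
    split_ifs with hprodP hP hP <;> try omega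
    obtain ⟨e, e', he, he', hend⟩ := hP
    exact (hprodP ⟨e, e', getElem?_transEdges_mul he γ, getElem?_transEdges_mul he' γ, hend⟩).elim

open KRHolonomy in
/-- For all `α, β, γ ∈ T¹ = KR_right(S,A)¹`, `D(αγ, βγ) ≥ D(α, β)`. -/
theorem lcD_mul_right_ge {A S : Type*} [Finite A] [Semigroup S] [Finite S]
    (θ : FreeMonoid A →* WithOne S)
    (hgen : ∀ s : S, ∃ u : FreeMonoid A, θ u = (s : WithOne S))
    (hproper : ∀ u : FreeMonoid A, θ u = 1 → u = 1)
    (α β γ : FreeMonoid A) :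
    lcD θ (α * γ) (β * γ) ≥ lcD θ α β :=
  lcD_mul_right_ge_general θ hgen α β γ
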